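/- arXiv:math/0607353 — 5 statements merged into one kernel-verified Lean document; each statement's English description precedes it below -/
import Mathlib

section
/- Let {X_α, φ_{αβ}} be an inverse system of chain connected uniform spaces over a directed partially ordered set, with uniformly continuous bonding maps. If every projection φ_α : X = lim X_α → X_α is surjective, then the inverse limit X, equipped with the subspace uniformity inherited from the product uniformity on Π_α X_α, is chain connected. -/
universe u v w

/-!
An entourage of the inverse limit contains the pullback of an entourage `U` of a single `X_k`:
the pullbacks of the uniformities of the `X_i` form a family that is directed, because the bonding
maps are uniformly continuous. Hence a uniformly continuous map `f` into a discrete space agrees on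
points whose `k`-th coordinates are `U`-close. Composing `f` with a section of the surjective
projection to `X_k` then gives a uniformly continuous map on `X_k`, which is constant since `X_k`
is chain connected, and `f` factors through it.
-/

def ChainConnected (X : Type u) [UniformSpace X] : Prop :=
  ∀ (Y : Type v) (f : X → Y), @UniformContinuous X Y _ ⊥ f → ∀ x y : X, f x = f y

/-- When the `Xs i` are uniform spaces, the instance found on this subtype of the product is
the subspace uniformity inherited from the product uniformity. -/
abbrev InvLim {ι : Type u} [Preorder ι] (Xs : ι → Type v)
    (φ : ∀ i j : ι, i ≤ j → Xs j → Xs i) : Type (max u v) :=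
  {x : ∀ i, Xs i // ∀ (i j : ι) (h : i ≤ j), φ i j h (x j) = x i}

open Filter Function
open scoped Uniformity

theorem uniformContinuous_bot_iff_setOf_eq_mem_uniformity {X : Type u} {Y : Type v}
    [UniformSpace X] {f : X → Y} :
    @UniformContinuous X Y _ ⊥ f ↔ {p : X × X | f p.1 = f p.2} ∈ 𝓤 X :=
  tendsto_principal

theorem ChainConnected.apply_eq_apply_of_surjective {X : Type u} {Z : Type v} {Y : Type w}
    [UniformSpace Z] (hZ : ChainConnected.{v, w} Z) {π : X → Z} (hπ : Surjective π)
    {f : X → Y} {U : SetRel Z Z} (hU : U ∈ 𝓤 Z) (hfU : ∀ a b, (π a, π b) ∈ U → f a = f b)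
    (x y : X) : f x = f y := by
  choose s hs using hπ
  have hfs : ∀ a, f a = f (s (π a)) := fun a ↦ hfU _ _ (by rw [hs]; exact refl_mem_uniformity hU)
  have hfs_uc : @UniformContinuous Z Y _ ⊥ (f ∘ s) :=
    uniformContinuous_bot_iff_setOf_eq_mem_uniformity.2 <|
      mem_of_superset hU fun p hp ↦ hfU _ _ (by rwa [hs, hs])
  rw [hfs x, hfs y]
  exact hZ Y _ hfs_uc (π x) (π y)

namespace InvLim

variable {ι : Type u} [Preorder ι] {Xs : ι → Type v} [∀ i, UniformSpace (Xs i)]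
  {φ : ∀ i j : ι, i ≤ j → Xs j → Xs i}

theorem uniformity_eq :
    𝓤 (InvLim Xs φ) = ⨅ i, comap (fun p : InvLim Xs φ × InvLim Xs φ ↦ (p.1.1 i, p.2.1 i))
      (𝓤 (Xs i)) := by
  rw [uniformity_subtype, Pi.uniformity, comap_iInf]
  simp only [comap_comap, Function.comp_def]

theorem antitone_comap_uniformity (hφuc : ∀ i j h, UniformContinuous (φ i j h)) :
    Antitone fun i ↦ comap (fun p : InvLim Xs φ × InvLim Xs φ ↦ (p.1.1 i, p.2.1 i))
      (𝓤 (Xs i)) := by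
  intro i k hik
  calc comap (fun p : InvLim Xs φ × InvLim Xs φ ↦ (p.1.1 k, p.2.1 k)) (𝓤 (Xs k))
      ≤ comap (fun p : InvLim Xs φ × InvLim Xs φ ↦ (p.1.1 k, p.2.1 k))
          (comap (Prod.map (φ i k hik) (φ i k hik)) (𝓤 (Xs i))) :=
        comap_mono (hφuc i k hik).le_comap
    _ = comap (fun p : InvLim Xs φ × InvLim Xs φ ↦ (p.1.1 i, p.2.1 i)) (𝓤 (Xs i)) := by
        rw [comap_comap]
        congr 1
        funext p
        exact Prod.ext (p.1.2 i k hik) (p.2.2 i k hik)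

theorem exists_mem_uniformity_of_mem_uniformity [IsDirected ι (· ≤ ·)] [Nonempty ι]
    (hφuc : ∀ i j h, UniformContinuous (φ i j h)) {S : SetRel (InvLim Xs φ) (InvLim Xs φ)}
    (hS : S ∈ 𝓤 (InvLim Xs φ)) :
    ∃ k, ∃ U ∈ 𝓤 (Xs k), ∀ a b : InvLim Xs φ, (a.1 k, b.1 k) ∈ U → (a, b) ∈ S := by
  rw [uniformity_eq, mem_iInf_of_directed (antitone_comap_uniformity hφuc).directed_ge] at hS
  obtain ⟨k, U, hU, hUS⟩ := hS
  exact ⟨k, U, hU, fun a b hab ↦ hUS hab⟩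

end InvLim

theorem chainConnected_invLim_general {ι : Type u} [PartialOrder ι] [IsDirected ι (· ≤ ·)]
    (Xs : ι → Type v) [∀ i, UniformSpace (Xs i)]
    (φ : ∀ i j : ι, i ≤ j → Xs j → Xs i)
    (hφuc : ∀ (i j : ι) (h : i ≤ j), UniformContinuous (φ i j h))
    (hcc : ∀ i : ι, ChainConnected.{v, w} (Xs i))
    (hsurj : ∀ i : ι, Function.Surjective (fun x : InvLim Xs φ => x.1 i)) :
    ChainConnected.{max u v, w} (InvLim Xs φ) := by
  intro Y f hf x y
  rcases isEmpty_or_nonempty ι with _ | _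
  · exact congrArg f (Subsingleton.elim x y)
  obtain ⟨k, U, hU, hUf⟩ := InvLim.exists_mem_uniformity_of_mem_uniformity hφuc
    (uniformContinuous_bot_iff_setOf_eq_mem_uniformity.1 hf)
  exact (hcc k).apply_eq_apply_of_surjective (hsurj k) hU hUf x y

/-- (Statement 5) Let `{X_α, φ_{αβ}}` be an inverse system of chain connected uniform spaces
over a directed partially ordered set, with uniformly continuous bonding maps.  If every
projection from the inverse limit is surjective, then the inverse limit (with the subspace
uniformity inherited from the product uniformity) is chain connected. -/
theorem chainConnected_invLim {ι : Type u} [PartialOrder ι] [IsDirected ι (· ≤ ·)]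
    (Xs : ι → Type v) [∀ i, UniformSpace (Xs i)]
    (φ : ∀ i j : ι, i ≤ j → Xs j → Xs i)
    (hφuc : ∀ (i j : ι) (h : i ≤ j), UniformContinuous (φ i j h))
    (hφid : ∀ (i : ι) (x : Xs i), φ i i le_rfl x = x)
    (hφcomp : ∀ (i j k : ι) (hij : i ≤ j) (hjk : j ≤ k) (x : Xs k),
      φ i j hij (φ j k hjk x) = φ i k (hij.trans hjk) x)
    (hcc : ∀ i : ι, ChainConnected.{v, w} (Xs i))
    (hsurj : ∀ i : ι, Function.Surjective (fun x : InvLim Xs φ => x.1 i)) :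
    ChainConnected.{max u v, w} (InvLim Xs φ) :=
  chainConnected_invLim_general Xs φ hφuc hcc hsurj
end

section
/- (Chain Lifting Lemma) Let X, Y be uniform spaces, f : X → Y a uniformly continuous surjection, F an entourage of Y, and E := (f × f)⁻¹(F). Let c be an E-chain in X and let η be an F-homotopy from the F-chain d := f(c) (the termwise image of c) to another F-chain d′. Then η lifts to an E-homotopy from c: there exist an E-chain c′ in X and an E-homotopy κ from c to c′ such that the termwise image f(κ) equals η; in particular f(c′) = d′. -/
/-!
With `E` the full preimage of `F`, a list is an `E`-chain exactly when its image is an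
`F`-chain, so an `F`-homotopy can be lifted one elementary move at a time: a deletion is
lifted by deleting the corresponding point, and an insertion of `y` by inserting any preimage
of `y`, which exists by surjectivity.
-/

universe u u'

/-- `l` is a (nonempty) `E`-chain, i.e. a finite sequence of points of `X` with all
consecutive pairs in `E`. -/
def IsChainList {X : Type u} (E : Set (X × X)) (l : List X) : Prop :=
  l ≠ [] ∧ l.Chain' (fun a b => (a, b) ∈ E)

/-- `l'` is an (elementary) `E`-extension of `l`: it is obtained from the `E`-chain
`l = (x₀, …, xₙ)` by inserting one point `x` strictly between two consecutive points
(keeping the endpoints fixed), the result `l'` again being an `E`-chain. -/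
def ChainExt {X : Type u} (E : Set (X × X)) (l l' : List X) : Prop :=
  ∃ (s t : List X) (x : X), s ≠ [] ∧ t ≠ [] ∧ l = s ++ t ∧ l' = s ++ x :: t ∧
    l.Chain' (fun a b => (a, b) ∈ E) ∧ l'.Chain' (fun a b => (a, b) ∈ E)

/-- Two `E`-chains are `E`-related if one is an `E`-extension of the other. -/
def ChainRelated {X : Type u} (E : Set (X × X)) (l l' : List X) : Prop :=
  ChainExt E l l' ∨ ChainExt E l' l

variable {X Y : Type*} {f : X → Y} {F : Set (Y × Y)}

theorem isChain_preimage_iff {l : List X} :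
    l.IsChain (fun a b => (a, b) ∈ Prod.map f f ⁻¹' F) ↔
      (l.map f).IsChain (fun a b => (a, b) ∈ F) :=
  (List.isChain_map (R := fun a b => (a, b) ∈ F) f).symm

theorem isChainList_preimage_iff {l : List X} :
    IsChainList (Prod.map f f ⁻¹' F) l ↔ IsChainList F (l.map f) :=
  and_congr List.map_eq_nil_iff.not.symm isChain_preimage_iff

theorem ChainExt.exists_lift_right (hf : Function.Surjective f) {c : List X} {d : List Y}
    (h : ChainExt F (c.map f) d) :
    ∃ c', c'.map f = d ∧ ChainExt (Prod.map f f ⁻¹' F) c c' := by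
  obtain ⟨s, t, y, hs, ht, hc, rfl, hcF, hdF⟩ := h
  obtain ⟨a, b, rfl, rfl, rfl⟩ := List.map_eq_append_iff.mp hc
  obtain ⟨x, rfl⟩ := hf y
  refine ⟨a ++ x :: b, by simp, a, b, x, by simpa using hs, by simpa using ht, rfl, rfl,
    isChain_preimage_iff.mpr hcF,
    isChain_preimage_iff.mpr (by rw [List.map_append, List.map_cons]; exact hdF)⟩

theorem ChainExt.exists_lift_left {c : List X} {d : List Y} (h : ChainExt F d (c.map f)) :
    ∃ c', c'.map f = d ∧ ChainExt (Prod.map f f ⁻¹' F) c' c := by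
  obtain ⟨s, t, y, hs, ht, rfl, hc, hdF, hcF⟩ := h
  obtain ⟨a, yt, rfl, rfl, hyt⟩ := List.map_eq_append_iff.mp hc
  obtain ⟨x, b, rfl, rfl, rfl⟩ := List.map_eq_cons_iff.mp hyt
  refine ⟨a ++ b, by simp, a, b, x, by simpa using hs, by simpa using ht, rfl, rfl,
    isChain_preimage_iff.mpr (by rw [List.map_append]; exact hdF), isChain_preimage_iff.mpr hcF⟩

theorem ChainRelated.exists_lift (hf : Function.Surjective f) {c : List X} {d : List Y}
    (h : ChainRelated F (c.map f) d) :
    ∃ c', c'.map f = d ∧ ChainRelated (Prod.map f f ⁻¹' F) c c' := by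
  rcases h with h | h
  · obtain ⟨c', hc', h'⟩ := h.exists_lift_right hf
    exact ⟨c', hc', .inl h'⟩
  · obtain ⟨c', hc', h'⟩ := h.exists_lift_left
    exact ⟨c', hc', .inr h'⟩

theorem exists_isChain_chainRelated_lift (hf : Function.Surjective f) (c : List X)
    (η : List (List Y)) (h : (c.map f :: η).IsChain (ChainRelated F)) :
    ∃ κ : List (List X), (c :: κ).IsChain (ChainRelated (Prod.map f f ⁻¹' F)) ∧
      κ.map (List.map f) = η := by
  induction η generalizing c with
  | nil => exact ⟨[], List.isChain_singleton c, rfl⟩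
  | cons d η ih =>
    obtain ⟨hcd, hη⟩ := List.isChain_cons_cons.mp h
    obtain ⟨c', rfl, hcc'⟩ := hcd.exists_lift hf
    obtain ⟨κ, hκ, rfl⟩ := ih c' hη
    exact ⟨c' :: κ, List.isChain_cons_cons.mpr ⟨hcc', hκ⟩, rfl⟩

theorem chain_lifting_general {X : Type u} {Y : Type u'}
    (f : X → Y) (hsurj : Function.Surjective f)
    (F : Set (Y × Y))
    (E : Set (X × X)) (hEdef : E = (fun p : X × X => (f p.1, f p.2)) ⁻¹' F)
    (c : List X)
    (η : List (List Y)) (d' : List Y)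
    (hη₁ : ∀ l ∈ η, IsChainList F l)
    (hη₂ : η.Chain' (ChainRelated F))
    (hη₃ : η.head? = some (c.map f)) (hη₄ : η.getLast? = some d') :
    ∃ (c' : List X) (κ : List (List X)),
      (∀ l ∈ κ, IsChainList E l) ∧
      κ.Chain' (ChainRelated E) ∧
      κ.head? = some c ∧ κ.getLast? = some c' ∧
      κ.map (List.map f) = η ∧ c'.map f = d' := by
  obtain ⟨η, rfl⟩ := List.head?_eq_some_iff.mp hη₃
  obtain ⟨κ, hκ, rfl⟩ := exists_isChain_chainRelated_lift hsurj c η hη₂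
  have hmap : (c :: κ).map (List.map f) = c.map f :: κ.map (List.map f) := rfl
  obtain ⟨c', hc', hc'd'⟩ : ∃ c', (c :: κ).getLast? = some c' ∧ c'.map f = d' := by
    rw [← hmap, List.getLast?_map, Option.map_eq_some_iff] at hη₄
    exact hη₄
  subst hEdef
  refine ⟨c', c :: κ, fun l hl => ?_, hκ, rfl, hc', hmap, hc'd'⟩
  exact isChainList_preimage_iff.mpr (hη₁ _ (hmap ▸ List.mem_map_of_mem hl))

/-- (Statement 7, Chain Lifting Lemma) Let `X, Y` be uniform spaces, `f : X → Y` a uniformly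
continuous surjection, `F` an entourage of `Y` and `E := (f × f)⁻¹(F)`.  Let `c` be an
`E`-chain in `X` and `η` an `F`-homotopy (a finite sequence of `F`-chains, consecutive ones
`F`-related) from the `F`-chain `d := f(c)` to another `F`-chain `d′`.  Then `η` lifts to an
`E`-homotopy `κ` from `c` to an `E`-chain `c′` whose termwise image under `f` is exactly `η`;
in particular `f(c′) = d′`. -/
theorem chain_lifting {X : Type u} {Y : Type u'} [UniformSpace X] [UniformSpace Y]
    (f : X → Y) (hf : UniformContinuous f) (hsurj : Function.Surjective f)
    (F : Set (Y × Y)) (hF : F ∈ uniformity Y) (hFsym : Prod.swap ⁻¹' F = F)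
    (E : Set (X × X)) (hEdef : E = (fun p : X × X => (f p.1, f p.2)) ⁻¹' F)
    (c : List X) (hc : IsChainList E c)
    (η : List (List Y)) (d' : List Y)
    (hη₁ : ∀ l ∈ η, IsChainList F l)
    (hη₂ : η.Chain' (ChainRelated F))
    (hη₃ : η.head? = some (c.map f)) (hη₄ : η.getLast? = some d') :
    ∃ (c' : List X) (κ : List (List X)),
      (∀ l ∈ κ, IsChainList E l) ∧
      κ.Chain' (ChainRelated E) ∧
      κ.head? = some c ∧ κ.getLast? = some c' ∧
      κ.map (List.map f) = η ∧ c'.map f = d' :=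
  chain_lifting_general f hsurj F E hEdef c η d' hη₁ hη₂ hη₃ hη₄
end

section
/- Let X be a compact Hausdorff topological space that is locally path connected, equipped with the unique uniformity compatible with its topology (whose entourages are precisely the neighborhoods of the diagonal in X × X, with a basis of open symmetric neighborhoods). Then X is uniformly locally pathwise connected: for every entourage E there is a symmetric entourage F ⊆ E such that every F-ball B(x,F) is open and path connected. -/
open UniformSpace

universe u

/-!
Cover `X` by open path connected sets `V x ∋ x`, each inside the `E'`-ball around `x`, where
`E' ○ E' ⊆ E`. The relation "lie in a common `V x`" is an open symmetric neighbourhood of the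
diagonal, hence an entourage because `X` is compact; it lies in `E`, and its ball around `y` is
the union of the path connected sets `V x` containing `y`, so it is open and path connected.
-/

section CoverRel

open scoped SetRel

variable {X ι : Type*}

def coverRel (V : ι → Set X) : SetRel X X :=
  ⋃ i, V i ×ˢ V i

variable {V : ι → Set X}

theorem mem_coverRel {a b : X} : (a, b) ∈ coverRel V ↔ ∃ i, a ∈ V i ∧ b ∈ V i := by
  simp [coverRel]

instance isSymm_coverRel : SetRel.IsSymm (coverRel V) :=
  ⟨fun _ _ h ↦ by
    obtain ⟨i, ha, hb⟩ := mem_coverRel.mp h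
    exact mem_coverRel.mpr ⟨i, hb, ha⟩⟩

theorem diagonal_subset_coverRel (hV : ∀ x, ∃ i, x ∈ V i) : Set.diagonal X ⊆ coverRel V := by
  rintro ⟨x, y⟩ (rfl : x = y)
  obtain ⟨i, hi⟩ := hV x
  exact mem_coverRel.mpr ⟨i, hi, hi⟩

theorem coverRel_subset_comp {U : SetRel X X} [U.IsSymm] {c : ι → X}
    (hV : ∀ i, V i ⊆ ball (c i) U) : coverRel V ⊆ U ○ U := by
  rintro ⟨a, b⟩ hab
  obtain ⟨i, ha, hb⟩ := mem_coverRel.mp hab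
  exact ⟨c i, U.symm (hV i ha), hV i hb⟩

section Topology

variable [TopologicalSpace X]

theorem isOpen_coverRel (hV : ∀ i, IsOpen (V i)) : IsOpen (coverRel V) :=
  isOpen_iUnion fun i ↦ (hV i).prod (hV i)

theorem isPathConnected_ball_coverRel {x : X} (hx : ∃ i, x ∈ V i)
    (hV : ∀ i, IsPathConnected (V i)) : IsPathConnected (ball x (coverRel V)) := by
  have hsub : ∀ i, x ∈ V i → V i ⊆ ball x (coverRel V) := fun i hxi y hy ↦
    mem_coverRel.mpr ⟨i, hxi, hy⟩
  obtain ⟨i, hxi⟩ := hx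
  refine ⟨x, hsub i hxi hxi, fun {y} hy ↦ ?_⟩
  obtain ⟨j, hxj, hyj⟩ := mem_coverRel.mp hy
  exact ((hV j).joinedIn x hxj y hyj).mono (hsub j hxj)

end Topology

theorem coverRel_mem_uniformity [UniformSpace X] [CompactSpace X] (hopen : ∀ i, IsOpen (V i))
    (hcover : ∀ x, ∃ i, x ∈ V i) : coverRel V ∈ uniformity X := by
  rw [← nhdsSet_diagonal_eq_uniformity]
  exact (isOpen_coverRel hopen).mem_nhdsSet.mpr (diagonal_subset_coverRel hcover)

end CoverRel

theorem uniformly_locally_pathwise_connected_of_compact_general {X : Type u} [UniformSpace X]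
    [CompactSpace X] [LocallyPathConnectedSpace X] :
    ∀ E ∈ uniformity X, SetRel.IsSymm E →
      ∃ F ∈ uniformity X, SetRel.IsSymm F ∧ F ⊆ E ∧
        ∀ x : X, IsOpen (ball x F) ∧ IsPathConnected (ball x F) := by
  intro E hE _
  obtain ⟨E', hE', _, hE'E⟩ := comp_symm_mem_uniformity_sets hE
  choose V hV hVE' using fun x ↦ (isOpen_isPathConnected_basis x).mem_iff.mp (ball_mem_nhds x hE')
  have hcover : ∀ x, ∃ y, x ∈ V y := fun x ↦ ⟨x, (hV x).2.1⟩
  refine ⟨coverRel V, coverRel_mem_uniformity (fun x ↦ (hV x).1) hcover, inferInstance,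
    (coverRel_subset_comp hVE').trans hE'E, fun x ↦ ⟨?_, ?_⟩⟩
  · exact isOpen_ball x (isOpen_coverRel fun y ↦ (hV y).1)
  · exact isPathConnected_ball_coverRel (hcover x) fun y ↦ (hV y).2.2

/-- (Statement 10) Let `X` be a compact Hausdorff locally path connected topological space,
equipped with the unique uniformity compatible with its topology.  Then `X` is uniformly
locally pathwise connected: for every entourage `E` there is a symmetric entourage `F ⊆ E`
such that every `F`-ball `B(x,F)` is open and path connected. -/
theorem uniformly_locally_pathwise_connected_of_compact {X : Type u} [UniformSpace X]
    [CompactSpace X] [T2Space X] [LocallyPathConnectedSpace X] :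
    ∀ E ∈ uniformity X, SetRel.IsSymm E →
      ∃ F ∈ uniformity X, SetRel.IsSymm F ∧ F ⊆ E ∧
        ∀ x : X, IsOpen (ball x F) ∧ IsPathConnected (ball x F) :=
  uniformly_locally_pathwise_connected_of_compact_general
end

section
/- Let X be a chain connected uniform space. If there is an entourage E of X such that every E-ball B(x,E) is a connected subset of X, then X is connected; moreover, for every n ≥ 1 every Eⁿ-ball is connected. -/
open UniformSpace

universe u v

/-- `relPow E n` is the `n`-fold composition `Eⁿ` of the relation `E` with itself
(with `E⁰ = idRel`). -/
def relPow {X : Type u} (E : Set (X × X)) : ℕ → Set (X × X)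
  | 0 => SetRel.id
  | n + 1 => SetRel.comp (relPow E n) E

/-!
Since `E` is reflexive, the `Eⁿ⁺¹`-ball around `x` is the `Eⁿ`-ball `S` together with the
`E`-balls around the points `y ∈ S`; each of those is connected and meets `S` in `y`, so the
`Eⁿ⁺¹`-balls are connected by induction. The union over `n` of the `Eⁿ`-balls around a point is
closed under `E`-steps in both directions, so its indicator is uniformly continuous into a
discrete space; chain connectedness makes it all of `X`, which is then a union of connected sets
through one point.
-/

open Set

theorem IsPreconnected.union_biUnion {α : Type*} [TopologicalSpace α] {s : Set α}
    {t : α → Set α} (hs : IsPreconnected s) (ht : ∀ y ∈ s, IsPreconnected (t y))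
    (hmem : ∀ y ∈ s, y ∈ t y) : IsPreconnected (s ∪ ⋃ y ∈ s, t y) := by
  rcases s.eq_empty_or_nonempty with rfl | ⟨x, hx⟩
  · simp [isPreconnected_empty]
  refine isPreconnected_of_forall x fun z hz => ?_
  rcases hz with hz | hz
  · exact ⟨s, subset_union_left, hx, hz, hs⟩
  · obtain ⟨y, hy, hzy⟩ := mem_iUnion₂.1 hz
    exact ⟨s ∪ t y, union_subset_union_right s (subset_biUnion_of_mem hy), Or.inl hx,
      Or.inr hzy, hs.union y hy (hmem y hy) (ht y hy)⟩

theorem ChainConnected.eq_univ_of_ball_subset {X : Type u} [UniformSpace X]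
    (hcc : ChainConnected.{u, v} X) {E : SetRel X X} (hE : E ∈ uniformity X) {U : Set X}
    (hU : ∀ a ∈ U, ball a E ⊆ U) {x : X} (hx : x ∈ U) : U = univ := by
  let f : X → ULift.{v} Prop := fun z => ULift.up (z ∈ U)
  have hf : @UniformContinuous X _ _ ⊥ f := by
    refine Filter.tendsto_principal.2 ?_
    filter_upwards [hE, symm_le_uniformity hE] with p hp hp'
    exact congrArg ULift.up (propext ⟨fun h => hU _ h hp, fun h => hU _ h hp'⟩)
  refine eq_univ_of_forall fun y => ?_
  have hyx : (y ∈ U) = (x ∈ U) := congrArg ULift.down (hcc _ f hf y x)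
  exact hyx ▸ hx

section relPow

variable {X : Type u} {E : SetRel X X}

theorem ball_relPow_succ (x : X) (n : ℕ) :
    ball x (relPow E (n + 1)) = ⋃ y ∈ ball x (relPow E n), ball y E := by
  ext z
  simp only [mem_iUnion₂, exists_prop]
  rfl

theorem ball_subset_ball_relPow_succ {x a : X} {n : ℕ} (ha : a ∈ ball x (relPow E n)) :
    ball a E ⊆ ball x (relPow E (n + 1)) := by
  rw [ball_relPow_succ]
  exact subset_biUnion_of_mem (u := fun y => ball y E) ha

theorem relPow_one (E : SetRel X X) : relPow E 1 = E :=
  SetRel.id_comp E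

variable [E.IsRefl]

theorem mem_ball_relPow_self (x : X) (n : ℕ) : x ∈ ball x (relPow E n) := by
  induction n with
  | zero => rfl
  | succ n ih => exact ball_subset_ball_relPow_succ ih E.rfl

theorem ball_relPow_succ_eq_union (x : X) (n : ℕ) :
    ball x (relPow E (n + 1)) = ball x (relPow E n) ∪ ⋃ y ∈ ball x (relPow E n), ball y E := by
  rw [ball_relPow_succ, union_eq_self_of_subset_left]
  exact fun y hy => mem_biUnion (t := fun y => ball y E) hy (E.refl y)

theorem isConnected_ball_relPow_succ [TopologicalSpace X]
    (hb : ∀ x : X, IsConnected (ball x E)) (n : ℕ) (x : X) :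
    IsConnected (ball x (relPow E (n + 1))) := by
  induction n generalizing x with
  | zero => simpa [relPow_one] using hb x
  | succ n ih =>
    refine ⟨⟨x, mem_ball_relPow_self x _⟩, ?_⟩
    rw [ball_relPow_succ_eq_union]
    exact (ih x).isPreconnected.union_biUnion (fun y _ => (hb y).isPreconnected)
      fun y _ => E.rfl

end relPow

theorem ChainConnected.iUnion_ball_relPow_succ_eq_univ {X : Type u} [UniformSpace X]
    (hcc : ChainConnected.{u, v} X) {E : SetRel X X} (hE : E ∈ uniformity X) (x : X) :
    ⋃ n, ball x (relPow E (n + 1)) = univ := by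
  have := isRefl_of_mem_uniformity hE
  refine hcc.eq_univ_of_ball_subset hE (fun a ha => ?_)
    (mem_iUnion.2 ⟨0, mem_ball_relPow_self x 1⟩)
  obtain ⟨n, hn⟩ := mem_iUnion.1 ha
  exact (ball_subset_ball_relPow_succ hn).trans (subset_iUnion_of_subset (n + 1) subset_rfl)

theorem connected_of_chainConnected_of_connected_balls_general {X : Type u} [UniformSpace X]
    [Nonempty X] (hcc : ChainConnected.{u, v} X)
    (E : Set (X × X)) (hE : E ∈ uniformity X)
    (hb : ∀ x : X, IsConnected (ball x E)) :
    ConnectedSpace X ∧ ∀ (n : ℕ) (x : X), IsConnected (ball x (relPow E (n + 1))) := by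
  have := isRefl_of_mem_uniformity hE
  have hballs := isConnected_ball_relPow_succ hb
  refine ⟨?_, hballs⟩
  obtain ⟨x⟩ := ‹Nonempty X›
  rw [connectedSpace_iff_univ, ← hcc.iUnion_ball_relPow_succ_eq_univ hE x]
  exact ⟨⟨x, mem_iUnion.2 ⟨0, mem_ball_relPow_self x 1⟩⟩,
    isPreconnected_iUnion ⟨x, mem_iInter.2 fun n => mem_ball_relPow_self x (n + 1)⟩
      fun n => (hballs n x).isPreconnected⟩

/-- (Statement 12) Let `X` be a (nonempty) chain connected uniform space.  If there is an
entourage `E` of `X` such that every `E`-ball is a connected subset of `X`, then `X` is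
connected; moreover, for every `n ≥ 1`, every `Eⁿ`-ball is connected. -/
theorem connected_of_chainConnected_of_connected_balls {X : Type u} [UniformSpace X]
    [Nonempty X] (hcc : ChainConnected.{u, v} X)
    (E : Set (X × X)) (hE : E ∈ uniformity X) (hEsym : SetRel.IsSymm E)
    (hb : ∀ x : X, IsConnected (ball x E)) :
    ConnectedSpace X ∧ ∀ (n : ℕ) (x : X), IsConnected (ball x (relPow E (n + 1))) :=
  connected_of_chainConnected_of_connected_balls_general hcc E hE hb
end

section
/- Let X be a chain connected uniform space. If there is an entourage E of X such that every E-ball B(x,E) is path connected, then X is path connected. -/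
open UniformSpace

universe u v

/-!
Points `E`-related to `x` lie in the path-connected ball `B(x, E)` together with `x`, so they
are joined to `x` by a path. Hence "being joined to a base point `x₀`" is a property that does
not change along `E`, i.e. it is a uniformly continuous map into the discrete space `Prop`; by
chain connectedness it is constant, and it holds at `x₀`.
-/

namespace ChainConnected

variable {X : Type u} [UniformSpace X]

theorem apply_eq_of_forall_mem_entourage (hcc : ChainConnected.{u, v} X) {Y : Type v}
    {f : X → Y} {E : Set (X × X)} (hE : E ∈ uniformity X) (hf : ∀ p ∈ E, f p.1 = f p.2)
    (x y : X) : f x = f y :=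
  hcc Y f (Filter.tendsto_principal.2 (Filter.mem_of_superset hE hf)) x y

theorem pathConnectedSpace_of_forall_mem_entourage_joined [Nonempty X]
    (hcc : ChainConnected.{u, v} X) {E : Set (X × X)} (hE : E ∈ uniformity X)
    (hjoin : ∀ p ∈ E, Joined p.1 p.2) : PathConnectedSpace X := by
  obtain ⟨x₀⟩ := ‹Nonempty X›
  have hstep : ∀ p ∈ E, (Joined x₀ p.1 ↔ Joined x₀ p.2) := fun p hp ↦
    ⟨fun h ↦ h.trans (hjoin p hp), fun h ↦ h.trans (hjoin p hp).symm⟩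
  have hconst (x : X) : ULift.up.{v} (Joined x₀ x₀) = ULift.up (Joined x₀ x) :=
    hcc.apply_eq_of_forall_mem_entourage (f := fun x ↦ ULift.up.{v} (Joined x₀ x)) hE
      (fun p hp ↦ congrArg ULift.up (propext (hstep p hp))) x₀ x
  have hjoined : ∀ x : X, Joined x₀ x := fun x ↦
    (ULift.up.inj (hconst x)).mp (Joined.refl x₀)
  exact ⟨⟨x₀⟩, fun x y ↦ (hjoined x).symm.trans (hjoined y)⟩

end ChainConnected

theorem joined_of_mem_of_isPathConnected_ball {X : Type u} [UniformSpace X] {E : Set (X × X)}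
    (hE : E ∈ uniformity X) {x y : X} (hb : IsPathConnected (ball x E)) (hxy : (x, y) ∈ E) :
    Joined x y :=
  (hb.joinedIn x (refl_mem_uniformity hE) y hxy).joined

theorem pathConnected_of_chainConnected_of_pathConnected_balls_general {X : Type u} [UniformSpace X]
    [Nonempty X] (hcc : ChainConnected.{u, v} X)
    (E : Set (X × X)) (hE : E ∈ uniformity X)
    (hb : ∀ x : X, IsPathConnected (ball x E)) :
    PathConnectedSpace X :=
  hcc.pathConnectedSpace_of_forall_mem_entourage_joined hE
    fun p hp ↦ joined_of_mem_of_isPathConnected_ball hE (hb p.1) hp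

/-- (Statement 13) Let `X` be a (nonempty) chain connected uniform space.  If there is an
entourage `E` of `X` such that every `E`-ball `B(x,E)` is path connected, then `X` is path
connected. -/
theorem pathConnected_of_chainConnected_of_pathConnected_balls {X : Type u} [UniformSpace X]
    [Nonempty X] (hcc : ChainConnected.{u, v} X)
    (E : Set (X × X)) (hE : E ∈ uniformity X) (hEsym : Prod.swap ⁻¹' E = E)
    (hb : ∀ x : X, IsPathConnected (ball x E)) :
    PathConnectedSpace X :=
  pathConnected_of_chainConnected_of_pathConnected_balls_general hcc E hE hb
end
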